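/- Let V = ℝ⁷ with the block bilinear form ⟨(v₁,v₂,v₃),(u₁,u₂,u₃)⟩ = v₁·u₃ + v₂u₂ + v₃·u₁ on ℝ³ × ℝ × ℝ³, R^× = ℤ³ × {−1,1} × {0}³, γ = (1,1,1,1,0,0,0), and W the group generated by {r_α : α ∈ R^×}. Then R^×_γ := R^× \ ({±γ} + (2ℤ)³ × {0}⁴) equals {(z₁,…,z₇) ∈ R^× : z₁z₂z₃ even}, and the W-orbit of γ in R^× is {±γ} + (2ℤ)³ × {0}⁴. -/

import Mathlib

/-- The symmetric bilinear form on `ℝ⁷ = ℝ³ × ℝ × ℝ³` given by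
`⟨(v₁,v₂,v₃),(u₁,u₂,u₃)⟩ = v₁·u₃ + v₂u₂ + v₃·u₁`. -/
def form7 (v u : Fin 7 → ℝ) : ℝ :=
  v 0 * u 4 + v 1 * u 5 + v 2 * u 6 + v 3 * u 3 + v 4 * u 0 + v 5 * u 1 + v 6 * u 2

/-- The reflection associated to an anisotropic vector `α`. -/
noncomputable def refl7 (α : Fin 7 → ℝ) (v : Fin 7 → ℝ) : Fin 7 → ℝ :=
  v - (2 * form7 v α / form7 α α) • α

lemma refl7_involutive (α : Fin 7 → ℝ) (h : form7 α α ≠ 0) :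
    Function.Involutive (refl7 α) := by
  intro v
  set c := 2 * form7 v α / form7 α α with hc
  have key : form7 (v - c • α) α = form7 v α - c * form7 α α := by
    simp only [form7, Pi.sub_apply, Pi.smul_apply, smul_eq_mul]
    ring
  show v - c • α - (2 * form7 (v - c • α) α / form7 α α) • α = v
  rw [key]
  have h2 : 2 * (form7 v α - c * form7 α α) / form7 α α = -c := by
    rw [hc]; field_simp; ring
  rw [h2]
  module

/-- The reflection in an anisotropic vector, as a permutation of `ℝ⁷`. -/
noncomputable def reflPerm7 (α : Fin 7 → ℝ) (h : form7 α α ≠ 0) : Equiv.Perm (Fin 7 → ℝ) :=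
  Function.Involutive.toPerm _ (refl7_involutive α h)

/-- The set of anisotropic roots `R^× = ℤ³ × {−1,1} × {0}³`. -/
def Rx7 : Set (Fin 7 → ℝ) :=
  {v | ∃ z : Fin 3 → ℤ, ∃ ε : ℤ, (ε = 1 ∨ ε = -1) ∧
    v = ![(z 0 : ℝ), (z 1 : ℝ), (z 2 : ℝ), (ε : ℝ), 0, 0, 0]}

/-- The set `{±γ} + (2ℤ)³ × {0}⁴` with `γ = (1,1,1,1,0,0,0)`. -/
def orbitSet7 : Set (Fin 7 → ℝ) :=
  {v | ∃ ε : ℝ, (ε = 1 ∨ ε = -1) ∧ ∃ k : Fin 3 → ℤ,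
    v = ε • ![(1:ℝ),1,1,1,0,0,0] + ![2*(k 0 : ℝ), 2*(k 1 : ℝ), 2*(k 2 : ℝ), 0, 0, 0, 0]}

section aux

@[simp] lemma vec7_0 {β : Type*} (a b c d e f g : β) : ![a,b,c,d,e,f,g] 0 = a := rfl
@[simp] lemma vec7_1 {β : Type*} (a b c d e f g : β) : ![a,b,c,d,e,f,g] 1 = b := rfl
@[simp] lemma vec7_2 {β : Type*} (a b c d e f g : β) : ![a,b,c,d,e,f,g] 2 = c := rfl
@[simp] lemma vec7_3 {β : Type*} (a b c d e f g : β) : ![a,b,c,d,e,f,g] 3 = d := rfl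
@[simp] lemma vec7_4 {β : Type*} (a b c d e f g : β) : ![a,b,c,d,e,f,g] 4 = e := rfl
@[simp] lemma vec7_5 {β : Type*} (a b c d e f g : β) : ![a,b,c,d,e,f,g] 5 = f := rfl
@[simp] lemma vec7_6 {β : Type*} (a b c d e f g : β) : ![a,b,c,d,e,f,g] 6 = g := rfl
@[simp] lemma vec3_0 {β : Type*} (a b c : β) : ![a,b,c] 0 = a := rfl
@[simp] lemma vec3_1 {β : Type*} (a b c : β) : ![a,b,c] 1 = b := rfl
@[simp] lemma vec3_2 {β : Type*} (a b c : β) : ![a,b,c] 2 = c := rfl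

lemma form7_aniso (a b c e : ℝ) (he : e*e = 1) :
    form7 ![a,b,c,e,0,0,0] ![a,b,c,e,0,0,0] = 1 := by
  show a*0 + b*0 + c*0 + e*e + 0*a + 0*b + 0*c = 1
  linear_combination he

lemma form7_aniso_ne (a b c e : ℝ) (he : e*e = 1) :
    form7 ![a,b,c,e,0,0,0] ![a,b,c,e,0,0,0] ≠ 0 := by
  rw [form7_aniso a b c e he]; norm_num

lemma form7_pair (a b c e x0 x1 x2 x3 : ℝ) :
    form7 ![x0,x1,x2,x3,0,0,0] ![a,b,c,e,0,0,0] = x3*e := by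
  show x0*0 + x1*0 + x2*0 + x3*e + 0*a + 0*b + 0*c = x3*e
  ring

lemma refl7_apply (a b c e x0 x1 x2 x3 : ℝ) (he : e*e = 1) :
    refl7 ![a,b,c,e,0,0,0] ![x0,x1,x2,x3,0,0,0] =
      ![x0-2*x3*e*a, x1-2*x3*e*b, x2-2*x3*e*c, -x3, 0, 0, 0] := by
  unfold refl7
  rw [form7_aniso a b c e he, form7_pair, div_one]
  funext i
  fin_cases i
  · show x0 - 2*(x3*e)*a = x0-2*x3*e*a; ring
  · show x1 - 2*(x3*e)*b = x1-2*x3*e*b; ring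
  · show x2 - 2*(x3*e)*c = x2-2*x3*e*c; ring
  · show x3 - 2*(x3*e)*e = -x3; linear_combination (-2*x3)*he
  · show (0:ℝ) - 2*(x3*e)*0 = 0; ring
  · show (0:ℝ) - 2*(x3*e)*0 = 0; ring
  · show (0:ℝ) - 2*(x3*e)*0 = 0; ring

lemma orbit_vec (e : ℝ) (k : Fin 3 → ℤ) :
    e • ![(1:ℝ),1,1,1,0,0,0] + ![2*(k 0 : ℝ), 2*(k 1 : ℝ), 2*(k 2 : ℝ), 0, 0, 0, 0]
      = ![e + 2*(k 0 : ℝ), e + 2*(k 1 : ℝ), e + 2*(k 2 : ℝ), e, 0, 0, 0] := by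
  funext i
  fin_cases i
  · show e*1 + 2*(k 0 : ℝ) = e + 2*(k 0 : ℝ); ring
  · show e*1 + 2*(k 1 : ℝ) = e + 2*(k 1 : ℝ); ring
  · show e*1 + 2*(k 2 : ℝ) = e + 2*(k 2 : ℝ); ring
  · show e*1 + 0 = e; ring
  · show e*0 + 0 = (0:ℝ); ring
  · show e*0 + 0 = (0:ℝ); ring
  · show e*0 + 0 = (0:ℝ); ring

lemma orbit_mem_iff (v : Fin 7 → ℝ) :
    v ∈ orbitSet7 ↔ ∃ e : ℝ, (e = 1 ∨ e = -1) ∧ ∃ k : Fin 3 → ℤ,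
      v = ![e + 2*(k 0 : ℝ), e + 2*(k 1 : ℝ), e + 2*(k 2 : ℝ), e, 0, 0, 0] := by
  constructor
  · rintro ⟨e, he, k, rfl⟩; exact ⟨e, he, k, orbit_vec e k⟩
  · rintro ⟨e, he, k, rfl⟩; exact ⟨e, he, k, (orbit_vec e k).symm⟩

lemma gamma_mem : ![(1:ℝ),1,1,1,0,0,0] ∈ orbitSet7 := by
  rw [orbit_mem_iff]
  refine ⟨1, Or.inl rfl, ![0,0,0], ?_⟩
  funext i; fin_cases i <;> norm_num

lemma refl_orbit (z : Fin 3 → ℤ) (ε : ℤ) (hε : ε = 1 ∨ ε = -1) (e : ℝ)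
    (he : e = 1 ∨ e = -1) (k : Fin 3 → ℤ) :
    refl7 ![(z 0 : ℝ), (z 1 : ℝ), (z 2 : ℝ), (ε : ℝ), 0, 0, 0]
      ![e + 2*(k 0 : ℝ), e + 2*(k 1 : ℝ), e + 2*(k 2 : ℝ), e, 0, 0, 0] ∈ orbitSet7 := by
  have hε2 : (ε:ℝ) * (ε:ℝ) = 1 := by rcases hε with rfl | rfl <;> norm_num
  rw [refl7_apply _ _ _ _ _ _ _ _ hε2, orbit_mem_iff]
  obtain ⟨t, ht, ht1⟩ : ∃ t : ℤ, ((t:ℝ) = e ∧ (t = 1 ∨ t = -1)) := by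
    rcases he with rfl | rfl
    · exact ⟨1, by norm_num, Or.inl rfl⟩
    · exact ⟨-1, by norm_num, Or.inr rfl⟩
  refine ⟨-e, by rcases he with rfl | rfl <;> norm_num, fun i => t + k i - t * ε * z i, ?_⟩
  funext i
  fin_cases i <;> simp only [vec7_0, vec7_1, vec7_2, vec7_3, vec7_4, vec7_5, vec7_6] <;>
    push_cast <;> subst ht <;> ring

lemma odd_pm (ε c : ℤ) (hε : ε = 1 ∨ ε = -1) : Odd (ε + 2*c) := by
  rcases hε with rfl | rfl
  · exact ⟨c, by ring⟩
  · exact ⟨c - 1, by ring⟩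

end aux

set_option maxHeartbeats 1000000 in
/-- With `R^× = ℤ³ × {−1,1} × {0}³ ⊆ ℝ⁷`, `γ = (1,1,1,1,0,0,0)` and
`W` the group generated by the reflections `r_α` for `α ∈ R^×`, one has
`R^×_γ := R^× \ ({±γ} + (2ℤ)³ × {0}⁴) = {(z₁,…,z₇) ∈ R^× : z₁z₂z₃ even}`,
and the `W`-orbit of `γ` is `{±γ} + (2ℤ)³ × {0}⁴`. -/
theorem Rgamma_and_orbit :
    Rx7 \ orbitSet7 = {v ∈ Rx7 | ∃ m : ℤ, v 0 * v 1 * v 2 = 2 * (m : ℝ)} ∧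
    {v : Fin 7 → ℝ | ∃ g ∈ Subgroup.closure
        {p : Equiv.Perm (Fin 7 → ℝ) | ∃ α ∈ Rx7, ∃ h : form7 α α ≠ 0, p = reflPerm7 α h},
      g ![(1:ℝ),1,1,1,0,0,0] = v} = orbitSet7 := by
  constructor
  · -- part 1
    ext v
    simp only [Set.mem_diff, Set.mem_setOf_eq, Set.mem_sep_iff]
    constructor
    · rintro ⟨⟨z, ε, hε, rfl⟩, hno⟩
      refine ⟨⟨z, ε, hε, rfl⟩, ?_⟩
      simp only [vec7_0, vec7_1, vec7_2]
      by_contra hodd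
      push_neg at hodd
      have h2 : ¬ (2 ∣ z 0 * z 1 * z 2) := by
        intro ⟨m, hm⟩
        exact hodd m (by exact_mod_cast hm)
      have hall : Odd (z 0) ∧ Odd (z 1) ∧ Odd (z 2) := by
        rw [Int.two_dvd_ne_zero, ← Int.odd_iff] at h2
        rw [Int.odd_mul, Int.odd_mul] at h2
        exact ⟨h2.1.1, h2.1.2, h2.2⟩
      apply hno
      rw [orbit_mem_iff]
      have hεodd : Odd ε := by rcases hε with rfl | rfl <;> decide
      obtain ⟨c0, hc0⟩ : ∃ c, z 0 = ε + 2*c := by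
        obtain ⟨r, hr⟩ := hall.1; obtain ⟨s, hs⟩ := hεodd; exact ⟨r - s, by omega⟩
      obtain ⟨c1, hc1⟩ : ∃ c, z 1 = ε + 2*c := by
        obtain ⟨r, hr⟩ := hall.2.1; obtain ⟨s, hs⟩ := hεodd; exact ⟨r - s, by omega⟩
      obtain ⟨c2, hc2⟩ : ∃ c, z 2 = ε + 2*c := by
        obtain ⟨r, hr⟩ := hall.2.2; obtain ⟨s, hs⟩ := hεodd; exact ⟨r - s, by omega⟩
      refine ⟨(ε:ℝ), by rcases hε with rfl | rfl <;> norm_num, ![c0, c1, c2], ?_⟩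
      funext i
      fin_cases i
      · show ((z 0 : ℤ) : ℝ) = (ε:ℝ) + 2*((c0:ℤ):ℝ); exact_mod_cast hc0
      · show ((z 1 : ℤ) : ℝ) = (ε:ℝ) + 2*((c1:ℤ):ℝ); exact_mod_cast hc1
      · show ((z 2 : ℤ) : ℝ) = (ε:ℝ) + 2*((c2:ℤ):ℝ); exact_mod_cast hc2
      · rfl
      · rfl
      · rfl
      · rfl
    · rintro ⟨⟨z, ε, hε, rfl⟩, m, hm⟩
      refine ⟨⟨z, ε, hε, rfl⟩, ?_⟩
      rintro hmem
      rw [orbit_mem_iff] at hmem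
      obtain ⟨e, he, k, heq⟩ := hmem
      have h3 := congrFun heq 3
      simp only [vec7_3] at h3
      have h0 := congrFun heq 0
      have h1 := congrFun heq 1
      have h2 := congrFun heq 2
      simp only [vec7_0, vec7_1, vec7_2] at h0 h1 h2
      rw [← h3] at h0 h1 h2
      have hz0 : z 0 = ε + 2 * k 0 := by exact_mod_cast h0
      have hz1 : z 1 = ε + 2 * k 1 := by exact_mod_cast h1
      have hz2 : z 2 = ε + 2 * k 2 := by exact_mod_cast h2
      have hoddp : Odd (z 0 * z 1 * z 2) := by
        rw [Int.odd_mul, Int.odd_mul, hz0, hz1, hz2]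
        exact ⟨⟨odd_pm _ _ hε, odd_pm _ _ hε⟩, odd_pm _ _ hε⟩
      have : z 0 * z 1 * z 2 = 2 * m := by
        have := hm
        simp only [vec7_0, vec7_1, vec7_2] at this
        exact_mod_cast this
      rw [this] at hoddp
      exact (Int.not_odd_iff_even.mpr ⟨m, by ring⟩) hoddp
  · -- part 2
    set S : Set (Equiv.Perm (Fin 7 → ℝ)) :=
      {p : Equiv.Perm (Fin 7 → ℝ) | ∃ α ∈ Rx7, ∃ h : form7 α α ≠ 0, p = reflPerm7 α h} with hS
    ext v
    simp only [Set.mem_setOf_eq]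
    constructor
    · rintro ⟨g, hg, rfl⟩
      -- prove by closure induction that g preserves orbitSet7
      have key : ∀ g : Equiv.Perm (Fin 7 → ℝ), ∀ _ : g ∈ Subgroup.closure S,
          ∀ w, w ∈ orbitSet7 ↔ g w ∈ orbitSet7 := by
        intro g hg
        induction hg using Subgroup.closure_induction with
        | mem p hp =>
          obtain ⟨α, hα, hne, rfl⟩ := hp
          obtain ⟨z, ε, hε, rfl⟩ := hα
          intro w
          have fwd : ∀ u, u ∈ orbitSet7 →
              refl7 ![(z 0:ℝ), z 1, z 2, (ε:ℝ), 0,0,0] u ∈ orbitSet7 := by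
            intro u hu
            rw [orbit_mem_iff] at hu
            obtain ⟨e, he, k, rfl⟩ := hu
            exact refl_orbit z ε hε e he k
          constructor
          · exact fwd w
          · intro hw
            have h2' := fwd _ hw
            rwa [show refl7 ![(z 0:ℝ), z 1, z 2, (ε:ℝ), 0,0,0]
              ((reflPerm7 ![(z 0:ℝ), z 1, z 2, (ε:ℝ), 0,0,0] hne) w) = w from
              refl7_involutive _ hne w] at h2'
        | one => intro w; exact Iff.rfl
        | mul x y hx hy ihx ihy =>
          intro w
          rw [Equiv.Perm.mul_apply]
          exact (ihy w).trans (ihx (y w))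
        | inv x hx ihx =>
          intro w
          have h := (ihx (x⁻¹ w)).symm
          rwa [← Equiv.Perm.mul_apply, mul_inv_cancel, Equiv.Perm.one_apply] at h
      exact (key g hg _).mp gamma_mem
    · intro hv
      rw [orbit_mem_iff] at hv
      obtain ⟨e, he, k, rfl⟩ := hv
      have h1 : ((1:ℝ)) * 1 = 1 := by norm_num
      -- α1 = e₄ basis reflection
      have hα1 : (![0,0,0,1,0,0,0] : Fin 7 → ℝ) ∈ Rx7 := by
        refine ⟨![0,0,0], 1, Or.inl rfl, ?_⟩
        funext i; fin_cases i <;> norm_num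
      have hne1 : form7 ![(0:ℝ),0,0,1,0,0,0] ![(0:ℝ),0,0,1,0,0,0] ≠ 0 :=
        form7_aniso_ne 0 0 0 1 h1
      rcases he with rfl | rfl
      · -- e = 1 : two reflections
        have hα2 : (![(k 0:ℝ), k 1, k 2, 1, 0,0,0] : Fin 7 → ℝ) ∈ Rx7 := by
          refine ⟨k, 1, Or.inl rfl, ?_⟩
          funext i; fin_cases i <;> norm_num
        have hne2 : form7 ![(k 0:ℝ), k 1, k 2, 1, 0,0,0] ![(k 0:ℝ), k 1, k 2, 1, 0,0,0] ≠ 0 :=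
          form7_aniso_ne _ _ _ 1 h1
        refine ⟨reflPerm7 _ hne2 * reflPerm7 _ hne1, ?_, ?_⟩
        · exact Subgroup.mul_mem _
            (Subgroup.subset_closure ⟨_, hα2, hne2, rfl⟩)
            (Subgroup.subset_closure ⟨_, hα1, hne1, rfl⟩)
        · show refl7 _ (refl7 _ ![(1:ℝ),1,1,1,0,0,0]) = _
          rw [refl7_apply 0 0 0 1 1 1 1 1 h1]
          have : (![1-2*1*1*0, 1-2*1*1*0, 1-2*1*1*0, -1, 0,0,0] : Fin 7 → ℝ)
              = ![1,1,1,-1,0,0,0] := by norm_num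
          rw [this, refl7_apply (k 0) (k 1) (k 2) 1 1 1 1 (-1) h1]
          funext i
          fin_cases i <;>
            simp only [vec7_0, vec7_1, vec7_2, vec7_3, vec7_4, vec7_5, vec7_6] <;> ring
      · -- e = -1 : one reflection
        have hα2 : (![(1 - k 0:ℝ), 1 - k 1, 1 - k 2, 1, 0,0,0] : Fin 7 → ℝ) ∈ Rx7 := by
          refine ⟨fun i => 1 - k i, 1, Or.inl rfl, ?_⟩
          funext i; fin_cases i <;> norm_num
        have hne2 : form7 ![(1 - k 0:ℝ), 1 - k 1, 1 - k 2, 1, 0,0,0]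
            ![(1 - k 0:ℝ), 1 - k 1, 1 - k 2, 1, 0,0,0] ≠ 0 :=
          form7_aniso_ne _ _ _ 1 h1
        refine ⟨reflPerm7 _ hne2, Subgroup.subset_closure ⟨_, hα2, hne2, rfl⟩, ?_⟩
        show refl7 _ ![(1:ℝ),1,1,1,0,0,0] = _
        rw [refl7_apply (1 - k 0) (1 - k 1) (1 - k 2) 1 1 1 1 1 h1]
        funext i
        fin_cases i <;>
          simp only [vec7_0, vec7_1, vec7_2, vec7_3, vec7_4, vec7_5, vec7_6] <;> ring
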